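/- arXiv:2311.13137 — 2 statements merged into one kernel-verified Lean document; each statement's English description precedes it below -/
import Mathlib

section
/- Let p ≥ 2 and 0 < γ < 2 − 2/p. For every M ∈ ℝ^{n×p} all of whose columns M_{·i} are nonzero, letting D = diag(γ‖M_{·1}‖^{−2}, …, γ‖M_{·p}‖^{−2}), the operator norm of D^{1/2} MᵀM D^{1/2} is strictly less than 2(p−1), and consequently the p×p symmetric matrix −2(p−1) D + D MᵀM D is negative definite. -/
open MeasureTheory Matrix Filter Topology Asymptotics

noncomputable section

namespace DoubleShrinkage

instance (n p : ℕ) : MeasureSpace (Matrix (Fin n) (Fin p) ℝ) :=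
  inferInstanceAs (MeasureSpace (Fin n → Fin p → ℝ))

instance (n p : ℕ) : NormedAddCommGroup (Matrix (Fin n) (Fin p) ℝ) :=
  inferInstanceAs (NormedAddCommGroup (Fin n → Fin p → ℝ))

instance (n p : ℕ) : NormedSpace ℝ (Matrix (Fin n) (Fin p) ℝ) :=
  inferInstanceAs (NormedSpace ℝ (Fin n → Fin p → ℝ))

instance (n p : ℕ) : BorelSpace (Matrix (Fin n) (Fin p) ℝ) :=
  inferInstanceAs (BorelSpace (Fin n → Fin p → ℝ))

/-- Squared Frobenius norm. -/
def frobSq {n p : ℕ} (M : Matrix (Fin n) (Fin p) ℝ) : ℝ := ∑ a, ∑ i, (M a i) ^ 2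

/-- Frobenius norm. -/
def frobNorm {n p : ℕ} (M : Matrix (Fin n) (Fin p) ℝ) : ℝ := Real.sqrt (frobSq M)

/-- Density of the matrix normal distribution `N_{n,p}(M, I_n, N⁻¹ I_p)` at `Y`. -/
def gaussD (n p N : ℕ) (M Y : Matrix (Fin n) (Fin p) ℝ) : ℝ :=
  ((N : ℝ) / (2 * Real.pi)) ^ (((n : ℝ) * p) / 2) * Real.exp (-(N : ℝ) * frobSq (Y - M) / 2)

/-- Standard Gaussian density on `ℝ^{n×p}`. -/
def stdGauss (n p : ℕ) (Z : Matrix (Fin n) (Fin p) ℝ) : ℝ :=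
  (2 * Real.pi) ^ (-((n : ℝ) * p) / 2) * Real.exp (-frobSq Z / 2)

/-- Singular value shrinkage prior. -/
def piSVS (n p : ℕ) (M : Matrix (Fin n) (Fin p) ℝ) : ℝ :=
  (Mᵀ * M).det ^ (-((n : ℝ) - p - 1) / 2)

/-- Singular value shrinkage prior with additional scalar shrinkage. -/
def piMSVS1 (n p : ℕ) (γ : ℝ) (M : Matrix (Fin n) (Fin p) ℝ) : ℝ :=
  piSVS n p M * frobNorm M ^ (-γ)

/-- Squared Euclidean norm of the i-th column. -/
def colNormSq {n p : ℕ} (M : Matrix (Fin n) (Fin p) ℝ) (i : Fin p) : ℝ := ∑ a, (M a i) ^ 2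

/-- Singular value shrinkage prior with additional column-wise shrinkage. -/
def piMSVS2 (n p : ℕ) (γ : Fin p → ℝ) (M : Matrix (Fin n) (Fin p) ℝ) : ℝ :=
  piSVS n p M * ∏ i, Real.sqrt (colNormSq M i) ^ (-γ i)

/-- Generalized Bayes estimator with respect to a prior density `π`. -/
def gBayes (n p N : ℕ) (π : Matrix (Fin n) (Fin p) ℝ → ℝ) (Y : Matrix (Fin n) (Fin p) ℝ) :
    Matrix (Fin n) (Fin p) ℝ :=
  (∫ M, gaussD n p N M Y * π M)⁻¹ • ∫ M, (gaussD n p N M Y * π M) • M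

/-- Frobenius risk of an estimator at `M`. -/
def frobRisk (n p N : ℕ) (Mhat : Matrix (Fin n) (Fin p) ℝ → Matrix (Fin n) (Fin p) ℝ)
    (M : Matrix (Fin n) (Fin p) ℝ) : ℝ :=
  ∫ Y, gaussD n p N M Y * frobSq (Mhat Y - M)

/-- Matrix quadratic risk of an estimator at `M`. -/
def matRisk (n p N : ℕ) (Mhat : Matrix (Fin n) (Fin p) ℝ → Matrix (Fin n) (Fin p) ℝ)
    (M : Matrix (Fin n) (Fin p) ℝ) : Matrix (Fin p) (Fin p) ℝ :=
  ∫ Y, gaussD n p N M Y • ((Mhat Y - M)ᵀ * (Mhat Y - M))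

/-- Laplacian of `f : ℝ^{n×p} → ℝ`: sum of all second partial derivatives. -/
def matLap {n p : ℕ} (f : Matrix (Fin n) (Fin p) ℝ → ℝ) (M : Matrix (Fin n) (Fin p) ℝ) : ℝ :=
  ∑ a, ∑ i, iteratedFDeriv ℝ 2 f M ![Matrix.single a i (1 : ℝ),
    Matrix.single a i (1 : ℝ)]

/-- Bayesian predictive density based on a prior density `π`. -/
def predD (n p N : ℕ) (π : Matrix (Fin n) (Fin p) ℝ → ℝ)
    (Y Yt : Matrix (Fin n) (Fin p) ℝ) : ℝ :=
  (∫ M, gaussD n p N M Y * π M)⁻¹ * ∫ M, gaussD n p 1 M Yt * (gaussD n p N M Y * π M)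

/-- Kullback–Leibler risk of the Bayesian predictive density based on `π` at `M`. -/
def klRisk (n p N : ℕ) (π : Matrix (Fin n) (Fin p) ℝ → ℝ)
    (M : Matrix (Fin n) (Fin p) ℝ) : ℝ :=
  ∫ Y, gaussD n p N M Y *
    ∫ Yt, gaussD n p 1 M Yt * Real.log (gaussD n p 1 M Yt / predD n p N π Y Yt)


/-- The ℓ²-operator norm of a square matrix. -/
def l2OpNorm {p : ℕ} (A : Matrix (Fin p) (Fin p) ℝ) : ℝ :=
  ‖LinearMap.toContinuousLinearMap (Matrix.toEuclideanLin A)‖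
end DoubleShrinkage

/-! Put `B = M D^{1/2}`. Every column of `B` has squared norm `γ`, so
`‖D^{1/2} MᵀM D^{1/2}‖ = ‖BᵀB‖ = ‖B‖² ≤ ‖B‖_F² = pγ < 2(p - 1)`.
For `x ≠ 0` and `y = D^{1/2} x ≠ 0` the quadratic form of `-2(p - 1) D + D MᵀM D` at `x` is
`-2(p - 1) ‖y‖² + yᵀ (D^{1/2} MᵀM D^{1/2}) y`, which is at most
`(‖D^{1/2} MᵀM D^{1/2}‖ - 2(p - 1)) ‖y‖² < 0`. -/

namespace Matrix

open scoped Matrix.Norms.L2Operator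

variable {m n : Type*} [Fintype m] [Fintype n]

theorem sum_mulVec_sq_le (B : Matrix m n ℝ) (x : n → ℝ) :
    ∑ i, (B *ᵥ x) i ^ 2 ≤ (∑ i, ∑ j, B i j ^ 2) * ∑ j, x j ^ 2 := by
  rw [Finset.sum_mul]
  gcongr with i
  exact Finset.sum_mul_sq_le_sq_mul_sq _ (B i) x

theorem l2_opNorm_le_sqrt_sum_sq [DecidableEq n] (B : Matrix m n ℝ) :
    ‖B‖ ≤ √(∑ i, ∑ j, B i j ^ 2) := by
  refine ContinuousLinearMap.opNorm_le_bound _ (Real.sqrt_nonneg _) fun x => ?_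
  rw [← Real.sqrt_sq (norm_nonneg _), ← Real.sqrt_sq (norm_nonneg x), ← Real.sqrt_mul',
    EuclideanSpace.real_norm_sq_eq, EuclideanSpace.real_norm_sq_eq]
  · exact Real.sqrt_le_sqrt (sum_mulVec_sq_le B x)
  · positivity

theorem l2_opNorm_transpose_mul_self_le [DecidableEq n] (B : Matrix m n ℝ) :
    ‖Bᵀ * B‖ ≤ ∑ i, ∑ j, B i j ^ 2 := by
  rw [← conjTranspose_eq_transpose_of_trivial, l2_opNorm_conjTranspose_mul_self,
    ← Real.sq_sqrt (by positivity : 0 ≤ ∑ i, ∑ j, B i j ^ 2), sq]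
  have := l2_opNorm_le_sqrt_sum_sq B
  gcongr

theorem dotProduct_mulVec_le_l2_opNorm_mul [DecidableEq n] (A : Matrix n n ℝ) (y : n → ℝ) :
    y ⬝ᵥ A *ᵥ y ≤ ‖A‖ * (y ⬝ᵥ y) := by
  have hy : y ⬝ᵥ y = ‖WithLp.toLp 2 y‖ ^ 2 := by
    rw [EuclideanSpace.real_norm_sq_eq]; simp [dotProduct, sq]
  calc y ⬝ᵥ A *ᵥ y = inner ℝ (WithLp.toLp 2 (A *ᵥ y)) (WithLp.toLp 2 y) := by
        simp [EuclideanSpace.inner_toLp_toLp]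
    _ ≤ ‖WithLp.toLp 2 (A *ᵥ y)‖ * ‖WithLp.toLp 2 y‖ := real_inner_le_norm _ _
    _ ≤ ‖A‖ * ‖WithLp.toLp 2 y‖ * ‖WithLp.toLp 2 y‖ := by
        gcongr; exact l2_opNorm_mulVec A _
    _ = ‖A‖ * (y ⬝ᵥ y) := by rw [hy]; ring

theorem dotProduct_self_pos {v : n → ℝ} (hv : v ≠ 0) : 0 < v ⬝ᵥ v :=
  lt_of_le_of_ne (Finset.sum_nonneg fun i _ => mul_self_nonneg (v i))
    (Ne.symm (dotProduct_self_eq_zero.not.2 hv))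

theorem sum_sq_mul_diagonal [DecidableEq n] (M : Matrix m n ℝ) (s : n → ℝ) :
    ∑ a, ∑ i, (M * diagonal s) a i ^ 2 = ∑ i, s i ^ 2 * ∑ a, M a i ^ 2 := by
  simp only [mul_diagonal, mul_pow, Finset.mul_sum]
  rw [Finset.sum_comm]
  exact Finset.sum_congr rfl fun i _ => Finset.sum_congr rfl fun a _ => mul_comm _ _

theorem dotProduct_diagonal_mul_mul_diagonal_mulVec [DecidableEq n] (s x : n → ℝ)
    (N : Matrix n n ℝ) :
    x ⬝ᵥ (diagonal s * N * diagonal s) *ᵥ x = (s * x) ⬝ᵥ N *ᵥ (s * x) := by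
  have hright : diagonal s *ᵥ x = s * x := funext (mulVec_diagonal s x)
  have hleft : x ᵥ* diagonal s = s * x :=
    funext fun i => (vecMul_diagonal x s i).trans (mul_comm _ _)
  rw [← mulVec_mulVec, ← mulVec_mulVec, dotProduct_mulVec, hright, hleft]

theorem dotProduct_mulVec_neg_of_l2_opNorm_lt [DecidableEq n] {d : n → ℝ} (hd : ∀ i, 0 < d i)
    {K : Matrix n n ℝ} {c : ℝ}
    (hK : ‖diagonal (fun i => √(d i)) * K * diagonal (fun i => √(d i))‖ < c)
    {x : n → ℝ} (hx : x ≠ 0) :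
    x ⬝ᵥ ((-c) • diagonal d + diagonal d * K * diagonal d) *ᵥ x < 0 := by
  set s : n → ℝ := fun i => √(d i)
  set A := diagonal s * K * diagonal s
  have hd_eq : diagonal d = diagonal s * 1 * diagonal s := by
    rw [Matrix.mul_one, diagonal_mul_diagonal]
    exact congrArg diagonal (funext fun i => (Real.mul_self_sqrt (hd i).le).symm)
  have hDKD : diagonal d * K * diagonal d = diagonal s * A * diagonal s := by
    simp only [hd_eq, A, Matrix.mul_one, Matrix.mul_assoc]
  have hy : 0 < (s * x) ⬝ᵥ (s * x) := by
    refine dotProduct_self_pos fun h => hx (funext fun i => ?_)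
    simpa [s, (Real.sqrt_pos.2 (hd i)).ne'] using congrFun h i
  calc x ⬝ᵥ ((-c) • diagonal d + diagonal d * K * diagonal d) *ᵥ x
      = -c * ((s * x) ⬝ᵥ (s * x)) + (s * x) ⬝ᵥ A *ᵥ (s * x) := by
        rw [add_mulVec, dotProduct_add, smul_mulVec, dotProduct_smul, hDKD, hd_eq,
          dotProduct_diagonal_mul_mul_diagonal_mulVec, dotProduct_diagonal_mul_mul_diagonal_mulVec,
          one_mulVec, smul_eq_mul]
    _ ≤ -c * ((s * x) ⬝ᵥ (s * x)) + ‖A‖ * ((s * x) ⬝ᵥ (s * x)) := by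
        gcongr; exact dotProduct_mulVec_le_l2_opNorm_mul A _
    _ < 0 := by nlinarith

end Matrix

namespace DoubleShrinkage

theorem colNormSq_pos {n p : ℕ} {M : Matrix (Fin n) (Fin p) ℝ} {i : Fin p}
    (h : (fun a => M a i) ≠ 0) : 0 < colNormSq M i := by
  simpa [colNormSq, dotProduct, sq] using dotProduct_self_pos h

/-- ‖D^{1/2} MᵀM D^{1/2}‖ < 2(p−1) and −2(p−1) D + D MᵀM D is
negative definite, for D = diag(γ‖M_{·i}‖^{−2}). -/
theorem stmt13 (n p : ℕ) (hp : 2 ≤ p) (γ : ℝ) (hγ0 : 0 < γ) (hγ : γ < 2 - 2 / (p : ℝ))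
    (M : Matrix (Fin n) (Fin p) ℝ) (hM : ∀ i, (fun a => M a i) ≠ 0) :
    l2OpNorm (Matrix.diagonal (fun i => Real.sqrt (γ * (colNormSq M i)⁻¹)) * (Mᵀ * M) *
        Matrix.diagonal (fun i => Real.sqrt (γ * (colNormSq M i)⁻¹))) <
      2 * ((p : ℝ) - 1) ∧
    ∀ x : Fin p → ℝ, x ≠ 0 →
      x ⬝ᵥ ((-(2 * ((p : ℝ) - 1))) • Matrix.diagonal (fun i => γ * (colNormSq M i)⁻¹) +
        Matrix.diagonal (fun i => γ * (colNormSq M i)⁻¹) * (Mᵀ * M) *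
          Matrix.diagonal (fun i => γ * (colNormSq M i)⁻¹)) *ᵥ x < 0 := by
  set d : Fin p → ℝ := fun i => γ * (colNormSq M i)⁻¹
  have hd : ∀ i, 0 < d i := fun i => mul_pos hγ0 (inv_pos.2 (colNormSq_pos (hM i)))
  set B := M * diagonal fun i => √(d i)
  have hB : ∑ a, ∑ i, B a i ^ 2 = p * γ := by
    have hcol : ∀ i, √(d i) ^ 2 * colNormSq M i = γ := fun i => by
      rw [Real.sq_sqrt (hd i).le]
      exact inv_mul_cancel_right₀ (colNormSq_pos (hM i)).ne' γ
    rw [sum_sq_mul_diagonal]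
    exact (Finset.sum_congr rfl fun i _ => hcol i).trans (by simp)
  have hpγ : (p : ℝ) * γ < 2 * ((p : ℝ) - 1) := by
    have hp0 : (0 : ℝ) < p := by positivity
    calc (p : ℝ) * γ < p * (2 - 2 / p) := by gcongr
      _ = 2 * ((p : ℝ) - 1) := by field_simp
  have hnorm : l2OpNorm (diagonal (fun i => √(d i)) * (Mᵀ * M) * diagonal fun i => √(d i)) <
      2 * ((p : ℝ) - 1) := by
    have hA :
        diagonal (fun i => √(d i)) * (Mᵀ * M) * diagonal (fun i => √(d i)) = Bᵀ * B := by
      simp only [B, transpose_mul, diagonal_transpose, Matrix.mul_assoc]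
    rw [hA]
    exact (l2_opNorm_transpose_mul_self_le B).trans_lt (hB ▸ hpγ)
  exact ⟨hnorm, fun x hx => dotProduct_mulVec_neg_of_l2_opNorm_lt hd hnorm hx⟩

end DoubleShrinkage
end
end

section
/- Let n ≥ p + 2 and γ ≥ 0, with γ_1 = ⋯ = γ_p = γ. At every M ∈ ℝ^{n×p} with det(MᵀM) > 0, the Laplacian of π_MSVS2 (the sum over all np entries of M of second partial derivatives) satisfies Δπ_MSVS2(M) = γ(γ + n − 2p) (Σ_{i=1}^p ‖M_{·i}‖^{−2}) π_MSVS2(M). In particular, if γ(γ + n − 2p) ≤ 0 then π_MSVS2 is superharmonic on {M : det(MᵀM) > 0}. -/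
open MeasureTheory Matrix Filter Topology Asymptotics

noncomputable section

namespace DoubleShrinkage

/-!
On `{M | det (MᵀM) > 0}` the prior is `π = exp φ` with
`φ = -c log det (MᵀM) - ∑ᵢ (γᵢ/2) log ‖M·ᵢ‖²` and `c = (n - p - 1)/2`, so its gradient is `π ∇φ`
and `Δπ = ∑_{a,i} ∂_{ai} (π ∂_{ai} φ) = π ∑_{a,i} ((∂_{ai} φ)² + ∂²_{ai} φ)`.
By Jacobi's formula `∇ log det (MᵀM) = 2K` with `K = M (MᵀM)⁻¹`, and differentiating `K` gives
`∂_{ai} K_{ai} = (1 - (KMᵀ)_{aa}) (MᵀM)⁻¹_{ii} - K_{ai}²`. Summing over `a` with `KᵀM = 1`,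
`KᵀK = (MᵀM)⁻¹` and `tr (KMᵀ) = p`, the `(MᵀM)⁻¹_{ii}` terms cancel (this is the harmonicity of
`π_SVS`), and column `i` contributes `γᵢ (γᵢ + n - 2p) / ‖M·ᵢ‖²`.
-/

section MatrixCalculus

variable {X : Type*} [NormedAddCommGroup X] [NormedSpace ℝ X] {l m k : ℕ}

def entryCLM (a : Fin m) (i : Fin k) : Matrix (Fin m) (Fin k) ℝ →L[ℝ] ℝ :=
  LinearMap.toContinuousLinearMap (Matrix.entryLinearMap ℝ ℝ a i)

@[simp] lemma entryCLM_apply (a : Fin m) (i : Fin k) (E : Matrix (Fin m) (Fin k) ℝ) :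
    entryCLM a i E = E a i := rfl

def transposeCLM : Matrix (Fin m) (Fin k) ℝ →L[ℝ] Matrix (Fin k) (Fin m) ℝ :=
  LinearMap.toContinuousLinearMap (Matrix.transposeLinearEquiv _ _ ℝ ℝ).toLinearMap

@[simp] lemma transposeCLM_apply (E : Matrix (Fin m) (Fin k) ℝ) : transposeCLM E = Eᵀ := rfl

def mulCLM :
    Matrix (Fin l) (Fin m) ℝ →L[ℝ] Matrix (Fin m) (Fin k) ℝ →L[ℝ] Matrix (Fin l) (Fin k) ℝ :=
  LinearMap.toContinuousLinearMap
    ((LinearMap.toContinuousLinearMap : _ ≃ₗ[ℝ] _).toLinearMap ∘ₗ mulLinearMap ℝ)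

@[simp] lemma mulCLM_apply (A : Matrix (Fin l) (Fin m) ℝ) (B : Matrix (Fin m) (Fin k) ℝ) :
    mulCLM A B = A * B := rfl

/-- The Frobenius pairing `⟨G, E⟩ = tr (Gᵀ E)`: `HasFDerivAt f (frobCLM G) M` says that `G` is the
gradient of `f` at `M`. -/
def frobCLM : Matrix (Fin m) (Fin k) ℝ →L[ℝ] Matrix (Fin m) (Fin k) ℝ →L[ℝ] ℝ :=
  LinearMap.toContinuousLinearMap
    ((LinearMap.toContinuousLinearMap : _ ≃ₗ[ℝ] _).toLinearMap ∘ₗ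
      LinearMap.mk₂ ℝ (fun G E => (Gᵀ * E).trace)
        (by simp [Matrix.add_mul]) (by simp) (by simp [Matrix.mul_add]) (by simp))

lemma frobCLM_apply (G E : Matrix (Fin m) (Fin k) ℝ) : frobCLM G E = (Gᵀ * E).trace := rfl

@[simp] lemma frobCLM_single (G : Matrix (Fin m) (Fin k) ℝ) (a : Fin m) (i : Fin k) :
    frobCLM G (Matrix.single a i 1) = G a i := by
  simp [frobCLM_apply, Matrix.trace_mul_single]

lemma mul_single_mul_apply {ι κ μ ν : Type*} [Fintype κ] [Fintype μ] [DecidableEq κ]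
    [DecidableEq μ] (A : Matrix ι κ ℝ) (B : Matrix μ ν ℝ) (b : κ) (j : μ) (a : ι) (i : ν) :
    (A * Matrix.single b j (1 : ℝ) * B) a i = A a b * B j i := by
  simp [Matrix.mul_apply, Matrix.single_apply, ite_and, Finset.sum_ite_eq]

lemma fderiv_matrix_apply {G : X → Matrix (Fin m) (Fin k) ℝ} {x : X}
    (hG : DifferentiableAt ℝ G x) (a : Fin m) (i : Fin k) (E : X) :
    fderiv ℝ (fun y => G y a i) x E = fderiv ℝ G x E a i :=
  congrArg (· E) ((entryCLM a i).hasFDerivAt.comp x hG.hasFDerivAt).fderiv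

theorem _root_.HasFDerivAt.matrix_mul {f : X → Matrix (Fin l) (Fin m) ℝ}
    {g : X → Matrix (Fin m) (Fin k) ℝ} {f' : X →L[ℝ] Matrix (Fin l) (Fin m) ℝ}
    {g' : X →L[ℝ] Matrix (Fin m) (Fin k) ℝ} {x : X}
    (hf : HasFDerivAt f f' x) (hg : HasFDerivAt g g' x) :
    HasFDerivAt (fun y => f y * g y) ((mulCLM (f x)).comp g' + (mulCLM.flip (g x)).comp f') x :=
  mulCLM.hasFDerivAt_of_bilinear hf hg

lemma fderiv_matrix_mul_apply {f : X → Matrix (Fin l) (Fin m) ℝ}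
    {g : X → Matrix (Fin m) (Fin k) ℝ} {x : X}
    (hf : DifferentiableAt ℝ f x) (hg : DifferentiableAt ℝ g x) (E : X) :
    fderiv ℝ (fun y => f y * g y) x E = fderiv ℝ f x E * g x + f x * fderiv ℝ g x E := by
  rw [(hf.hasFDerivAt.matrix_mul hg.hasFDerivAt).fderiv]
  simp [add_comm]

lemma hasFDerivAt_gram (M : Matrix (Fin m) (Fin k) ℝ) :
    HasFDerivAt (fun y : Matrix (Fin m) (Fin k) ℝ => yᵀ * y)
      (mulCLM Mᵀ + (mulCLM.flip M).comp transposeCLM) M := by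
  simpa using transposeCLM.hasFDerivAt.matrix_mul (hasFDerivAt_id M)

def detContinuousMultilinearMap (m : ℕ) :
    ContinuousMultilinearMap ℝ (fun _ : Fin m => Fin m → ℝ) ℝ :=
  { Matrix.detRowAlternating.toMultilinearMap with cont := continuous_id.matrix_det }

lemma det_updateRow_eq_sum_adjugate (A : Matrix (Fin m) (Fin m) ℝ) (i : Fin m)
    (v : Fin m → ℝ) : (A.updateRow i v).det = ∑ j, A.adjugate j i * v j := by
  rw [← Matrix.cramer_transpose_apply, Matrix.cramer_eq_adjugate_mulVec,
    ← Matrix.adjugate_transpose]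
  rfl

theorem hasFDerivAt_det (A : Matrix (Fin m) (Fin m) ℝ) :
    HasFDerivAt Matrix.det (frobCLM A.adjugateᵀ) A := by
  have h : HasFDerivAt Matrix.det ((detContinuousMultilinearMap m).linearDeriv A) A :=
    (detContinuousMultilinearMap m).hasFDerivAt A
  refine h.congr_fderiv (ContinuousLinearMap.ext fun (E : Matrix (Fin m) (Fin m) ℝ) => ?_)
  erw [ContinuousMultilinearMap.linearDeriv_apply]
  change ∑ i, (A.updateRow i (E i)).det = (A.adjugateᵀᵀ * E).trace
  simp only [det_updateRow_eq_sum_adjugate, Matrix.transpose_transpose, Matrix.trace,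
    Matrix.diag, Matrix.mul_apply]
  exact Finset.sum_comm

lemma differentiable_updateRow (i : Fin m) (v : Fin m → ℝ) :
    Differentiable ℝ fun B : Matrix (Fin m) (Fin m) ℝ => B.updateRow i v := by
  refine differentiable_pi.2 fun r => differentiable_pi.2 fun c => ?_
  by_cases h : r = i <;> simp only [Matrix.updateRow_apply, h, if_true, if_false] <;> fun_prop

lemma differentiableAt_matrix_inv {A : Matrix (Fin m) (Fin m) ℝ} (hA : A.det ≠ 0) :
    DifferentiableAt ℝ (fun B : Matrix (Fin m) (Fin m) ℝ => B⁻¹) A := by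
  have hdet : Differentiable ℝ (Matrix.det : Matrix (Fin m) (Fin m) ℝ → ℝ) :=
    fun B => (hasFDerivAt_det B).differentiableAt
  refine differentiableAt_pi.2 fun i => differentiableAt_pi.2 fun j => ?_
  simp only [Matrix.inv_def, Ring.inverse_eq_inv', Matrix.smul_apply, smul_eq_mul,
    Matrix.adjugate_apply]
  exact ((hdet A).inv hA).mul ((hdet.comp (differentiable_updateRow j _)) A)

lemma fderiv_matrix_inv_apply {A : Matrix (Fin m) (Fin m) ℝ} (hA : A.det ≠ 0)
    (E : Matrix (Fin m) (Fin m) ℝ) :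
    fderiv ℝ (fun B : Matrix (Fin m) (Fin m) ℝ => B⁻¹) A E = -(A⁻¹ * E * A⁻¹) := by
  have hconst : (fun B : Matrix (Fin m) (Fin m) ℝ => B * B⁻¹) =ᶠ[𝓝 A] fun _ => 1 :=
    Filter.eventually_of_mem
      ((isOpen_ne_fun continuous_id.matrix_det continuous_const).mem_nhds hA)
      fun B hB => Matrix.mul_nonsing_inv B (Ne.isUnit hB)
  have h := fderiv_matrix_mul_apply (f := fun B => B) differentiableAt_id
    (differentiableAt_matrix_inv hA) E
  rw [hconst.fderiv_eq, fderiv_const_apply, fderiv_fun_id, _root_.zero_apply,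
    ContinuousLinearMap.id_apply] at h
  calc _ = A⁻¹ * (A * fderiv ℝ (fun B : Matrix (Fin m) (Fin m) ℝ => B⁻¹) A E) := by
        rw [← Matrix.mul_assoc, Matrix.nonsing_inv_mul _ hA.isUnit, Matrix.one_mul]
    _ = -(A⁻¹ * E * A⁻¹) := by
        rw [eq_neg_of_add_eq_zero_right h.symm, Matrix.mul_neg, Matrix.mul_assoc]

theorem matLap_eq_sum_of_hasFDerivAt {f : Matrix (Fin m) (Fin k) ℝ → ℝ}
    {G : Matrix (Fin m) (Fin k) ℝ → Matrix (Fin m) (Fin k) ℝ} {M : Matrix (Fin m) (Fin k) ℝ}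
    (hf : ∀ᶠ y in 𝓝 M, HasFDerivAt f (frobCLM (G y)) y) (hG : DifferentiableAt ℝ G M) :
    matLap f M = ∑ a, ∑ i, fderiv ℝ (fun y => G y a i) M (Matrix.single a i 1) := by
  have h2 : fderiv ℝ (fderiv ℝ f) M = frobCLM.comp (fderiv ℝ G M) := by
    have hfG : fderiv ℝ f =ᶠ[𝓝 M] fun y => frobCLM (G y) := hf.mono fun y hy => hy.fderiv
    rw [hfG.fderiv_eq]
    exact (frobCLM.hasFDerivAt.comp M hG.hasFDerivAt).fderiv
  refine Finset.sum_congr rfl fun a _ => Finset.sum_congr rfl fun i _ => ?_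
  simp [iteratedFDeriv_two_apply, h2, fderiv_matrix_apply hG]

end MatrixCalculus

section PseudoInverse

variable {n p : ℕ} {M : Matrix (Fin n) (Fin p) ℝ}

/-- The transpose `M (MᵀM)⁻¹` of the Moore–Penrose pseudoinverse of `M`. -/
def pinvT (M : Matrix (Fin n) (Fin p) ℝ) : Matrix (Fin n) (Fin p) ℝ := M * (Mᵀ * M)⁻¹

lemma transpose_mul_pinvT (hM : (Mᵀ * M).det ≠ 0) : Mᵀ * pinvT M = 1 := by
  rw [pinvT, ← Matrix.mul_assoc, Matrix.mul_nonsing_inv _ hM.isUnit]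

lemma pinvT_transpose : (pinvT M)ᵀ = (Mᵀ * M)⁻¹ * Mᵀ := by
  rw [pinvT, Matrix.transpose_mul, Matrix.transpose_nonsing_inv, Matrix.transpose_mul,
    Matrix.transpose_transpose]

lemma pinvT_transpose_mul_self (hM : (Mᵀ * M).det ≠ 0) : (pinvT M)ᵀ * M = 1 := by
  rw [pinvT_transpose, Matrix.mul_assoc, Matrix.nonsing_inv_mul _ hM.isUnit]

lemma pinvT_transpose_mul_pinvT (hM : (Mᵀ * M).det ≠ 0) :
    (pinvT M)ᵀ * pinvT M = (Mᵀ * M)⁻¹ := by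
  rw [pinvT_transpose, Matrix.mul_assoc, transpose_mul_pinvT hM, Matrix.mul_one]

lemma trace_pinvT_mul_transpose (hM : (Mᵀ * M).det ≠ 0) : (pinvT M * Mᵀ).trace = p := by
  rw [Matrix.trace_mul_comm, transpose_mul_pinvT hM, Matrix.trace_one, Fintype.card_fin]

lemma sum_pinvT_sq (hM : (Mᵀ * M).det ≠ 0) (i : Fin p) :
    ∑ a, pinvT M a i ^ 2 = (Mᵀ * M)⁻¹ i i := by
  simp [← pinvT_transpose_mul_pinvT hM, Matrix.mul_apply, sq]

lemma sum_pinvT_mul_self (hM : (Mᵀ * M).det ≠ 0) (i : Fin p) :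
    ∑ a, pinvT M a i * M a i = 1 := by
  simpa [Matrix.mul_apply] using congrFun (congrFun (pinvT_transpose_mul_self hM) i) i

lemma hasFDerivAt_inv_gram (hM : (Mᵀ * M).det ≠ 0) :
    HasFDerivAt (fun y : Matrix (Fin n) (Fin p) ℝ => (yᵀ * y)⁻¹)
      ((fderiv ℝ (fun B => B⁻¹) (Mᵀ * M)).comp
        (mulCLM Mᵀ + (mulCLM.flip M).comp transposeCLM)) M :=
  (differentiableAt_matrix_inv hM).hasFDerivAt.comp (f := fun y => yᵀ * y) M (hasFDerivAt_gram M)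

lemma differentiableAt_pinvT (hM : (Mᵀ * M).det ≠ 0) : DifferentiableAt ℝ pinvT M :=
  ((hasFDerivAt_id (𝕜 := ℝ) M).matrix_mul (f := fun y => y)
    (hasFDerivAt_inv_gram hM)).differentiableAt

lemma fderiv_pinvT_apply (hM : (Mᵀ * M).det ≠ 0) (E : Matrix (Fin n) (Fin p) ℝ) :
    fderiv ℝ pinvT M E = E * (Mᵀ * M)⁻¹ - pinvT M * (Mᵀ * E + Eᵀ * M) * (Mᵀ * M)⁻¹ := by
  change fderiv ℝ (fun y => y * (yᵀ * y)⁻¹) M E = _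
  rw [((hasFDerivAt_id (𝕜 := ℝ) M).matrix_mul (f := fun y => y)
    (hasFDerivAt_inv_gram hM)).fderiv]
  simp [fderiv_matrix_inv_apply hM, pinvT, Matrix.mul_assoc, Matrix.add_mul, Matrix.mul_add,
    sub_eq_add_neg, add_comm]

lemma fderiv_pinvT_apply_single (hM : (Mᵀ * M).det ≠ 0) (a : Fin n) (i : Fin p) :
    fderiv ℝ (fun y => pinvT y a i) M (Matrix.single a i 1)
      = (1 - (pinvT M * Mᵀ) a a) * (Mᵀ * M)⁻¹ i i - pinvT M a i ^ 2 := by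
  rw [fderiv_matrix_apply (differentiableAt_pinvT hM), fderiv_pinvT_apply hM]
  simp only [Matrix.mul_add, Matrix.add_mul, ← Matrix.mul_assoc, Matrix.transpose_single,
    Matrix.sub_apply, Matrix.add_apply, mul_single_mul_apply]
  rw [Matrix.mul_assoc _ M, ← pinvT, mul_single_mul_apply, Matrix.single_mul_apply_same]
  ring

end PseudoInverse

section Prior

variable {n p : ℕ} {M : Matrix (Fin n) (Fin p) ℝ}

lemma colNormSq_eq_gram_apply (M : Matrix (Fin n) (Fin p) ℝ) (i : Fin p) :
    colNormSq M i = (Mᵀ * M) i i := by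
  simp [colNormSq, Matrix.mul_apply, sq]

lemma colNormSq_pos_s15 (hM : (Mᵀ * M).det ≠ 0) (i : Fin p) : 0 < colNormSq M i := by
  refine (Finset.sum_nonneg fun a _ => sq_nonneg (M a i)).lt_of_ne fun h => hM ?_
  have hcol : ∀ a, M a i = 0 := fun a => pow_eq_zero_iff two_ne_zero |>.1 <|
    (Finset.sum_eq_zero_iff_of_nonneg fun a _ => sq_nonneg (M a i)).1 h.symm a (Finset.mem_univ a)
  exact Matrix.det_eq_zero_of_row_eq_zero i fun j => by simp [Matrix.mul_apply, hcol]

lemma hasFDerivAt_colNormSq (M : Matrix (Fin n) (Fin p) ℝ) (j : Fin p) :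
    HasFDerivAt (fun y : Matrix (Fin n) (Fin p) ℝ => colNormSq y j)
      (frobCLM ((2 : ℝ) • (M * Matrix.single j j (1 : ℝ)))) M := by
  have h : HasFDerivAt (fun y : Matrix (Fin n) (Fin p) ℝ => colNormSq y j)
      ((entryCLM j j).comp (mulCLM Mᵀ + (mulCLM.flip M).comp transposeCLM)) M := by
    simp_rw [colNormSq_eq_gram_apply]
    exact (entryCLM j j).hasFDerivAt.comp M (hasFDerivAt_gram M)
  refine h.congr_fderiv (ContinuousLinearMap.ext fun E => ?_)
  have hE : (Eᵀ * M) j j = (Mᵀ * E) j j := by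
    rw [← Matrix.transpose_apply (Mᵀ * E), Matrix.transpose_mul, Matrix.transpose_transpose]
  simp [frobCLM_apply, Matrix.transpose_mul, Matrix.transpose_single, Matrix.mul_assoc,
    Matrix.trace_single_mul, hE]
  ring

lemma hasFDerivAt_log_det_gram (hM : (Mᵀ * M).det ≠ 0) :
    HasFDerivAt (fun y : Matrix (Fin n) (Fin p) ℝ => Real.log (yᵀ * y).det)
      (frobCLM ((2 : ℝ) • pinvT M)) M := by
  refine (((hasFDerivAt_det _).comp M (hasFDerivAt_gram M)).log hM).congr_fderiv ?_
  ext1 E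
  have hsymm : ((Mᵀ * M)⁻¹)ᵀ = (Mᵀ * M)⁻¹ := by
    rw [Matrix.transpose_nonsing_inv, Matrix.transpose_mul, Matrix.transpose_transpose]
  have hcycle : ((Mᵀ * M)⁻¹ * (Eᵀ * M)).trace = ((Mᵀ * M)⁻¹ * Mᵀ * E).trace := by
    rw [← Matrix.trace_transpose, Matrix.transpose_mul, Matrix.transpose_mul, hsymm,
      Matrix.transpose_transpose, Matrix.trace_mul_cycle]
  have hinv : (Mᵀ * M).det⁻¹ • ((Mᵀ * M).adjugate * (Mᵀ * E + Eᵀ * M)).trace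
      = ((Mᵀ * M)⁻¹ * (Mᵀ * E + Eᵀ * M)).trace := by
    rw [Matrix.inv_def, Ring.inverse_eq_inv', Matrix.smul_mul, Matrix.trace_smul]
  simp only [_root_.smul_apply, ContinuousLinearMap.comp_apply, _root_.add_apply, mulCLM_apply,
    ContinuousLinearMap.flip_apply, transposeCLM_apply, frobCLM_apply,
    Matrix.transpose_transpose, Function.comp_apply]
  rw [hinv, Matrix.mul_add, Matrix.trace_add, hcycle, Matrix.transpose_smul, pinvT_transpose,
    Matrix.smul_mul, Matrix.trace_smul, two_smul, Matrix.mul_assoc]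

/-- `log π_MSVS2`, on the set where `det (MᵀM) > 0`. -/
def logPrior (n p : ℕ) (γ : Fin p → ℝ) (M : Matrix (Fin n) (Fin p) ℝ) : ℝ :=
  -((n : ℝ) - p - 1) / 2 * Real.log (Mᵀ * M).det - ∑ j, γ j / 2 * Real.log (colNormSq M j)

def gradLogPrior (n p : ℕ) (γ : Fin p → ℝ) (M : Matrix (Fin n) (Fin p) ℝ) :
    Matrix (Fin n) (Fin p) ℝ :=
  -((n : ℝ) - p - 1) • pinvT M - M * Matrix.diagonal fun j => γ j / colNormSq M j

lemma gradLogPrior_apply (γ : Fin p → ℝ) (M : Matrix (Fin n) (Fin p) ℝ) (a : Fin n)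
    (i : Fin p) : gradLogPrior n p γ M a i
      = -((n : ℝ) - p - 1) * pinvT M a i - γ i * (M a i * (colNormSq M i)⁻¹) := by
  simp [gradLogPrior, Matrix.mul_diagonal]
  ring

lemma piMSVS2_eq_exp_logPrior (γ : Fin p → ℝ) (hM : 0 < (Mᵀ * M).det) :
    piMSVS2 n p γ M = Real.exp (logPrior n p γ M) := by
  have hs := colNormSq_pos_s15 hM.ne'
  simp only [piMSVS2, piSVS, logPrior, Real.rpow_def_of_pos hM,
    Real.rpow_def_of_pos (Real.sqrt_pos.2 (hs _)), Real.log_sqrt (hs _).le, ← Real.exp_sum,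
    ← Real.exp_add, sub_eq_add_neg, ← Finset.sum_neg_distrib]
  congr 2
  · ring
  · exact Finset.sum_congr rfl fun j _ => by ring

lemma piMSVS2_nonneg (γ : Fin p → ℝ) (hM : 0 ≤ (Mᵀ * M).det) : 0 ≤ piMSVS2 n p γ M :=
  mul_nonneg (Real.rpow_nonneg hM _)
    (Finset.prod_nonneg fun _ _ => Real.rpow_nonneg (Real.sqrt_nonneg _) _)

lemma hasFDerivAt_logPrior (γ : Fin p → ℝ) (hM : (Mᵀ * M).det ≠ 0) :
    HasFDerivAt (logPrior n p γ) (frobCLM (gradLogPrior n p γ M)) M := by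
  refine (((hasFDerivAt_log_det_gram hM).const_mul _).sub (HasFDerivAt.fun_sum fun j _ =>
    ((hasFDerivAt_colNormSq M j).log (colNormSq_pos_s15 hM j).ne').const_mul
      (γ j / 2))).congr_fderiv ?_
  have hcol : ∀ j, (γ j / 2) • (colNormSq M j)⁻¹ •
      frobCLM ((2 : ℝ) • (M * Matrix.single j j (1 : ℝ)))
        = frobCLM (M * Matrix.single j j (γ j / colNormSq M j)) := fun j => by
    rw [← map_smul, ← map_smul, smul_smul, smul_smul, ← Matrix.mul_smul, Matrix.smul_single,
      smul_eq_mul, mul_one]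
    congr 3
    field_simp
  rw [gradLogPrior, map_sub, ← Matrix.sum_single_eq_diagonal, Matrix.mul_sum, map_sum, map_smul,
    map_smul, smul_smul, Finset.sum_congr rfl fun j _ => hcol j]
  congr 2
  ring

lemma eventually_det_gram_pos (hM : 0 < (Mᵀ * M).det) :
    ∀ᶠ y : Matrix (Fin n) (Fin p) ℝ in 𝓝 M, 0 < (yᵀ * y).det :=
  (continuous_id.matrix_transpose.matrix_mul continuous_id).matrix_det.continuousAt.eventually
    (lt_mem_nhds hM)

lemma hasFDerivAt_piMSVS2 (γ : Fin p → ℝ) (hM : 0 < (Mᵀ * M).det) :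
    HasFDerivAt (piMSVS2 n p γ) (frobCLM (piMSVS2 n p γ M • gradLogPrior n p γ M)) M := by
  have hexp := (hasFDerivAt_logPrior γ hM.ne').exp
  rw [← piMSVS2_eq_exp_logPrior γ hM, ← map_smul] at hexp
  exact hexp.congr_of_eventuallyEq <|
    (eventually_det_gram_pos hM).mono fun y hy => piMSVS2_eq_exp_logPrior γ hy

end Prior

section PriorLaplacian

variable {n p : ℕ} {M : Matrix (Fin n) (Fin p) ℝ}

lemma differentiableAt_gradLogPrior_apply (γ : Fin p → ℝ) (hM : (Mᵀ * M).det ≠ 0)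
    (a : Fin n) (i : Fin p) : DifferentiableAt ℝ (fun y => gradLogPrior n p γ y a i) M := by
  simp only [gradLogPrior_apply]
  exact ((entryCLM a i).differentiableAt.comp M (differentiableAt_pinvT hM)).const_mul _ |>.sub <|
    ((entryCLM a i).differentiableAt.mul <|
      (hasFDerivAt_colNormSq M i).differentiableAt.inv (colNormSq_pos_s15 hM i).ne').const_mul _

lemma fderiv_gradLogPrior_apply_single (γ : Fin p → ℝ) (hM : (Mᵀ * M).det ≠ 0)
    (a : Fin n) (i : Fin p) :
    fderiv ℝ (fun y => gradLogPrior n p γ y a i) M (Matrix.single a i 1)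
      = -((n : ℝ) - p - 1) * ((1 - (pinvT M * Mᵀ) a a) * (Mᵀ * M)⁻¹ i i - pinvT M a i ^ 2)
        - γ i * (1 / colNormSq M i - 2 * M a i ^ 2 / colNormSq M i ^ 2) := by
  have hs := (colNormSq_pos_s15 hM i).ne'
  have hK : HasFDerivAt (fun y => pinvT y a i) (fderiv ℝ (fun y => pinvT y a i) M) M :=
    ((entryCLM a i).differentiableAt.comp M (differentiableAt_pinvT hM)).hasFDerivAt
  have h : HasFDerivAt (fun y => gradLogPrior n p γ y a i)
      (-((n : ℝ) - p - 1) • fderiv ℝ (fun y => pinvT y a i) M - γ i • (M a i •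
        (-(colNormSq M i ^ 2)⁻¹ • frobCLM ((2 : ℝ) • (M * Matrix.single i i (1 : ℝ))))
          + (colNormSq M i)⁻¹ • entryCLM a i)) M := by
    simp only [gradLogPrior_apply]
    exact (hK.const_mul _).sub (((entryCLM a i).hasFDerivAt.mul
      ((hasDerivAt_inv hs).comp_hasFDerivAt M (hasFDerivAt_colNormSq M i))).const_mul (γ i))
  rw [h.fderiv]
  simp [fderiv_pinvT_apply_single hM]
  field_simp
  ring

lemma fderiv_piMSVS2_mul_gradLogPrior_single (γ : Fin p → ℝ) (hM : 0 < (Mᵀ * M).det)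
    (a : Fin n) (i : Fin p) :
    fderiv ℝ (fun y => piMSVS2 n p γ y * gradLogPrior n p γ y a i) M (Matrix.single a i 1)
      = piMSVS2 n p γ M * (gradLogPrior n p γ M a i ^ 2
        + fderiv ℝ (fun y => gradLogPrior n p γ y a i) M (Matrix.single a i 1)) := by
  rw [((hasFDerivAt_piMSVS2 γ hM).fun_mul
    (differentiableAt_gradLogPrior_apply γ hM.ne' a i).hasFDerivAt).fderiv]
  simp
  ring

lemma sum_gradLogPrior_sq (γ : Fin p → ℝ) (hM : (Mᵀ * M).det ≠ 0) (i : Fin p) :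
    ∑ a, gradLogPrior n p γ M a i ^ 2 = ((n : ℝ) - p - 1) ^ 2 * (Mᵀ * M)⁻¹ i i
      + 2 * ((n : ℝ) - p - 1) * γ i / colNormSq M i + γ i ^ 2 / colNormSq M i := by
  have hs := (colNormSq_pos_s15 hM i).ne'
  have hexpand : ∀ a, gradLogPrior n p γ M a i ^ 2 = ((n : ℝ) - p - 1) ^ 2 * pinvT M a i ^ 2
      + 2 * ((n : ℝ) - p - 1) * γ i / colNormSq M i * (pinvT M a i * M a i)
      + γ i ^ 2 / colNormSq M i ^ 2 * M a i ^ 2 := fun a => by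
    rw [gradLogPrior_apply]
    field_simp
    ring
  simp only [hexpand, Finset.sum_add_distrib, ← Finset.mul_sum, sum_pinvT_sq hM,
    sum_pinvT_mul_self hM]
  rw [← colNormSq]
  field_simp

lemma sum_fderiv_gradLogPrior_apply_single (γ : Fin p → ℝ) (hM : (Mᵀ * M).det ≠ 0) (i : Fin p) :
    ∑ a, fderiv ℝ (fun y => gradLogPrior n p γ y a i) M (Matrix.single a i 1)
      = -((n : ℝ) - p - 1) ^ 2 * (Mᵀ * M)⁻¹ i i - γ i * (n - 2) / colNormSq M i := by
  have hs := (colNormSq_pos_s15 hM i).ne'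
  have htr : ∑ a, (pinvT M * Mᵀ) a a = p := trace_pinvT_mul_transpose hM
  simp only [fderiv_gradLogPrior_apply_single γ hM, sub_mul, one_mul, mul_sub, div_eq_mul_inv,
    Finset.sum_sub_distrib, ← Finset.sum_mul, ← Finset.mul_sum, Finset.sum_const,
    Finset.card_univ, Fintype.card_fin, nsmul_eq_mul, htr, sum_pinvT_sq hM]
  rw [← colNormSq]
  field_simp
  ring

lemma sum_fderiv_piMSVS2_mul_gradLogPrior_single (γ : Fin p → ℝ) (hM : 0 < (Mᵀ * M).det)
    (i : Fin p) :
    ∑ a, fderiv ℝ (fun y => piMSVS2 n p γ y * gradLogPrior n p γ y a i) M (Matrix.single a i 1)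
      = γ i * (γ i + n - 2 * p) / colNormSq M i * piMSVS2 n p γ M := by
  have hs := (colNormSq_pos_s15 hM.ne' i).ne'
  simp only [fderiv_piMSVS2_mul_gradLogPrior_single γ hM, ← Finset.mul_sum,
    Finset.sum_add_distrib, sum_gradLogPrior_sq γ hM.ne',
    sum_fderiv_gradLogPrior_apply_single γ hM.ne']
  field_simp
  ring

theorem matLap_piMSVS2 (γ : Fin p → ℝ) (hM : 0 < (Mᵀ * M).det) :
    matLap (piMSVS2 n p γ) M
      = (∑ i, γ i * (γ i + n - 2 * p) / colNormSq M i) * piMSVS2 n p γ M := by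
  have hG : DifferentiableAt ℝ (fun y => piMSVS2 n p γ y • gradLogPrior n p γ y) M :=
    differentiableAt_pi.2 fun a => differentiableAt_pi.2 fun i =>
      (hasFDerivAt_piMSVS2 γ hM).differentiableAt.mul
        (differentiableAt_gradLogPrior_apply γ hM.ne' a i)
  rw [matLap_eq_sum_of_hasFDerivAt ((eventually_det_gram_pos hM).mono
    fun y hy => hasFDerivAt_piMSVS2 γ hy) hG, Finset.sum_comm, Finset.sum_mul]
  simp only [Matrix.smul_apply, smul_eq_mul, sum_fderiv_piMSVS2_mul_gradLogPrior_single γ hM]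

end PriorLaplacian

theorem stmt15_general (n p : ℕ) (γ : ℝ)
    (M : Matrix (Fin n) (Fin p) ℝ) (hdet : 0 < (Mᵀ * M).det) :
    matLap (piMSVS2 n p (fun _ => γ)) M =
      γ * (γ + (n : ℝ) - 2 * p) * (∑ i, (colNormSq M i)⁻¹) *
        piMSVS2 n p (fun _ => γ) M ∧
    (γ * (γ + (n : ℝ) - 2 * p) ≤ 0 → matLap (piMSVS2 n p (fun _ => γ)) M ≤ 0) := by
  have hlap : matLap (piMSVS2 n p (fun _ => γ)) M =
      γ * (γ + (n : ℝ) - 2 * p) * (∑ i, (colNormSq M i)⁻¹) * piMSVS2 n p (fun _ => γ) M := by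
    simp only [matLap_piMSVS2 _ hdet, Finset.mul_sum, div_eq_mul_inv]
  refine ⟨hlap, fun hneg => hlap ▸ mul_nonpos_of_nonpos_of_nonneg ?_ (piMSVS2_nonneg _ hdet.le)⟩
  exact mul_nonpos_of_nonpos_of_nonneg hneg
    (Finset.sum_nonneg fun i _ => (inv_pos.2 (colNormSq_pos_s15 hdet.ne' i)).le)

/-- the Laplacian of π_MSVS2 (with γ_1 = ⋯ = γ_p = γ) equals
γ(γ + n − 2p) (Σ_i ‖M_{·i}‖^{−2}) π_MSVS2(M) at every M with det(MᵀM) > 0;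
in particular π_MSVS2 is superharmonic there when γ(γ + n − 2p) ≤ 0. -/
theorem stmt15 (n p : ℕ) (hn : p + 2 ≤ n) (γ : ℝ) (hγ0 : 0 ≤ γ)
    (M : Matrix (Fin n) (Fin p) ℝ) (hdet : 0 < (Mᵀ * M).det) :
    matLap (piMSVS2 n p (fun _ => γ)) M =
      γ * (γ + (n : ℝ) - 2 * p) * (∑ i, (colNormSq M i)⁻¹) *
        piMSVS2 n p (fun _ => γ) M ∧
    (γ * (γ + (n : ℝ) - 2 * p) ≤ 0 → matLap (piMSVS2 n p (fun _ => γ)) M ≤ 0) :=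
  stmt15_general n p γ M hdet

end DoubleShrinkage
end
end
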